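/- arXiv:math/9810135 — 4 statements merged into one kernel-verified Lean document; each statement's English description precedes it below -/
import Mathlib

section
/- Let H be a complex Hilbert space, A and F continuous linear operators on H with F self-adjoint, and for s ∈ ℝ set Δ(s) := exp(sF) ∘ A* ∘ exp(−2sF) ∘ A ∘ exp(sF). Fix s ∈ ℝ and suppose Φ ∈ H is a unit vector with Δ(s) Φ = λ • Φ for a real number λ > 0, and set Ψ := λ^{-1/2} • ((exp(−sF) ∘ A ∘ exp(sF)) Φ). Then ⟪Φ, (F ∘ Δ(s) + Δ(s) ∘ F − 2 • (exp(sF) ∘ A* ∘ F ∘ exp(−2sF) ∘ A ∘ exp(sF))) Φ⟫ = 2λ ⟪Φ, F Φ⟫ − 2λ ⟪Ψ, F Ψ⟫. -/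
/-!
Writing `T := e^{-sF} A e^{sF}`, self-adjointness of `e^{sF}` and the group law give
`Δ(s) = T* T` and `e^{sF} A* F e^{-2sF} A e^{sF} = T* F T`. For an eigenvector `Φ` of `T* T`,
both `⟪Φ, F T* T Φ⟫` and `⟪Φ, T* T F Φ⟫` equal `λ ⟪Φ, F Φ⟫`, while
`⟪Φ, T* F T Φ⟫ = ⟪T Φ, F T Φ⟫ = λ ⟪Ψ, F Ψ⟫`.
-/

open ContinuousLinearMap
open scoped InnerProductSpace

theorem NormedSpace.exp_smul_mul_exp_smul (𝕂 : Type*) {R 𝔸 : Type*} [RCLike 𝕂] [Semiring R]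
    [NormedRing 𝔸] [NormedAlgebra 𝕂 𝔸] [CompleteSpace 𝔸] [Module R 𝔸] [SMulCommClass R 𝔸 𝔸]
    [IsScalarTower R 𝔸 𝔸] (x : 𝔸) (t u : R) :
    exp (t • x) * exp (u • x) = exp ((t + u) • x) := by
  have hball (y : 𝔸) : y ∈ Metric.eball (0 : 𝔸) (expSeries 𝕂 𝔸).radius := by
    simp [expSeries_radius_eq_top]
  rw [add_smul, exp_add_of_commute_of_mem_ball (((Commute.refl x).smul_left t).smul_right u)
    (hball _) (hball _)]

section

variable {H : Type*} [NormedAddCommGroup H] [InnerProductSpace ℂ H]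

theorem mul_inner_rpow_neg_half_smul (F : H →L[ℂ] H) {lam : ℝ} (hlam : 0 < lam) (x : H) :
    (lam : ℂ) * ⟪((lam ^ (-(1/2 : ℝ)) : ℝ) : ℂ) • x, F (((lam ^ (-(1/2 : ℝ)) : ℝ) : ℂ) • x)⟫_ℂ
      = ⟪x, F x⟫_ℂ := by
  have hsq : lam * (lam ^ (-(1/2 : ℝ)) * lam ^ (-(1/2 : ℝ))) = 1 := by
    rw [← Real.rpow_add hlam, show -(1/2 : ℝ) + -(1/2) = -1 by norm_num, Real.rpow_neg_one,
      mul_inv_cancel₀ hlam.ne']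
  rw [map_smul, inner_smul_left, inner_smul_right, Complex.conj_ofReal, ← mul_assoc, ← mul_assoc,
    ← Complex.ofReal_mul, ← Complex.ofReal_mul, mul_assoc lam, hsq, Complex.ofReal_one, one_mul]

variable [CompleteSpace H]

theorem inner_anticommutator_sub_two_conj_of_eigen (T F : H →L[ℂ] H) {Φ : H} {lam : ℝ}
    (heig : (adjoint T ∘L T) Φ = (lam : ℂ) • Φ) :
    ⟪Φ, (F ∘L (adjoint T ∘L T) + (adjoint T ∘L T) ∘L F
        - (2 : ℝ) • (adjoint T ∘L F ∘L T)) Φ⟫_ℂ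
      = 2 * (lam : ℂ) * ⟪Φ, F Φ⟫_ℂ - 2 * ⟪T Φ, F (T Φ)⟫_ℂ := by
  have hleft : ⟪Φ, F ((adjoint T ∘L T) Φ)⟫_ℂ = lam * ⟪Φ, F Φ⟫_ℂ := by
    rw [heig, map_smul, inner_smul_right]
  have hright : ⟪Φ, (adjoint T ∘L T) (F Φ)⟫_ℂ = lam * ⟪Φ, F Φ⟫_ℂ := by
    have hsa : IsSelfAdjoint (adjoint T ∘L T) := IsSelfAdjoint.star_mul_self T
    rw [← hsa.adjoint_eq, adjoint_inner_right, heig, inner_smul_left, Complex.conj_ofReal]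
  have hmiddle : ⟪Φ, (adjoint T ∘L F ∘L T) Φ⟫_ℂ = ⟪T Φ, F (T Φ)⟫_ℂ :=
    adjoint_inner_right T Φ _
  rw [sub_apply, add_apply, inner_sub_right, inner_add_right, comp_apply, hleft, comp_apply,
    hright, smul_apply, RCLike.real_smul_eq_coe_smul (K := ℂ), inner_smul_right, hmiddle]
  push_cast
  ring

theorem IsSelfAdjoint.adjoint_exp_smul {F : H →L[ℂ] H} (hF : IsSelfAdjoint F) (t : ℝ) :
    adjoint (NormedSpace.exp (t • F)) = NormedSpace.exp (t • F) :=
  ((IsSelfAdjoint.all t).smul hF).exp.adjoint_eq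

theorem IsSelfAdjoint.adjoint_exp_conj_comp_comp {F : H →L[ℂ] H} (hF : IsSelfAdjoint F)
    (A G : H →L[ℂ] H) (hFG : Commute F G) (s : ℝ) :
    adjoint (NormedSpace.exp ((-s) • F) ∘L A ∘L NormedSpace.exp (s • F)) ∘L G ∘L
        (NormedSpace.exp ((-s) • F) ∘L A ∘L NormedSpace.exp (s • F))
      = NormedSpace.exp (s • F) ∘L adjoint A ∘L G ∘L NormedSpace.exp ((-2 * s) • F) ∘L A ∘L
          NormedSpace.exp (s • F) := by
  have hGE : NormedSpace.exp ((-s) • F) ∘L G ∘L NormedSpace.exp ((-s) • F)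
      = G ∘L NormedSpace.exp ((-2 * s) • F) := by
    change _ * (G * _) = G * _
    rw [← mul_assoc, ((hFG.smul_left (-s)).exp_left).eq, mul_assoc,
      NormedSpace.exp_smul_mul_exp_smul ℂ, show -s + -s = -2 * s by ring]
  have hGEA := congrArg (· ∘L A ∘L NormedSpace.exp (s • F)) hGE
  simp only [comp_assoc] at hGEA
  simp only [adjoint_comp, hF.adjoint_exp_smul, comp_assoc, hGEA]


end

theorem variation_per_eigenvector_general
    {H : Type*} [NormedAddCommGroup H] [InnerProductSpace ℂ H] [CompleteSpace H]
    (A F : H →L[ℂ] H) (hF : IsSelfAdjoint F) (s : ℝ)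
    (Φ : H) (lam : ℝ) (hlam : 0 < lam)
    (heig : (NormedSpace.exp (s • F) ∘L ContinuousLinearMap.adjoint A ∘L
        NormedSpace.exp ((-2 * s) • F) ∘L A ∘L NormedSpace.exp (s • F)) Φ
      = (lam : ℂ) • Φ) :
    ⟪Φ, (F ∘L (NormedSpace.exp (s • F) ∘L ContinuousLinearMap.adjoint A ∘L
          NormedSpace.exp ((-2 * s) • F) ∘L A ∘L NormedSpace.exp (s • F))
        + (NormedSpace.exp (s • F) ∘L ContinuousLinearMap.adjoint A ∘L
          NormedSpace.exp ((-2 * s) • F) ∘L A ∘L NormedSpace.exp (s • F)) ∘L F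
        - (2 : ℝ) • (NormedSpace.exp (s • F) ∘L ContinuousLinearMap.adjoint A ∘L F ∘L
          NormedSpace.exp ((-2 * s) • F) ∘L A ∘L NormedSpace.exp (s • F))) Φ⟫_ℂ
      = 2 * (lam : ℂ) * ⟪Φ, F Φ⟫_ℂ
        - 2 * (lam : ℂ) *
          ⟪((lam ^ (-(1/2 : ℝ)) : ℝ) : ℂ) •
              (NormedSpace.exp ((-s) • F) ∘L A ∘L NormedSpace.exp (s • F)) Φ,
            F (((lam ^ (-(1/2 : ℝ)) : ℝ) : ℂ) •
              (NormedSpace.exp ((-s) • F) ∘L A ∘L NormedSpace.exp (s • F)) Φ)⟫_ℂ := by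
  set T := NormedSpace.exp ((-s) • F) ∘L A ∘L NormedSpace.exp (s • F)
  have hΔ : adjoint T ∘L T = NormedSpace.exp (s • F) ∘L adjoint A ∘L
      NormedSpace.exp ((-2 * s) • F) ∘L A ∘L NormedSpace.exp (s • F) := by
    simpa only [id_comp] using
      hF.adjoint_exp_conj_comp_comp A (.id ℂ H) (Commute.one_right F) s
  rw [← hΔ] at heig ⊢
  rw [← hF.adjoint_exp_conj_comp_comp A F (Commute.refl F) s,
    inner_anticommutator_sub_two_conj_of_eigen T F heig,
    ← mul_inner_rpow_neg_half_smul F hlam (T Φ)]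
  ring

/-- Per-eigenvector identity for the variation of the regularised determinant:
`⟪Φ, Δ'(s) Φ⟫ = 2λ ⟪Φ, F Φ⟫ − 2λ ⟪Ψ, F Ψ⟫` where `Φ` is a unit eigenvector of
`Δ(s) = e^{sF} A* e^{-2sF} A e^{sF}` for the eigenvalue `λ > 0` and
`Ψ = λ^{-1/2} (e^{-sF} A e^{sF}) Φ`. -/
theorem variation_per_eigenvector
    {H : Type*} [NormedAddCommGroup H] [InnerProductSpace ℂ H] [CompleteSpace H]
    (A F : H →L[ℂ] H) (hF : IsSelfAdjoint F) (s : ℝ)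
    (Φ : H) (lam : ℝ) (hlam : 0 < lam) (hΦ : ‖Φ‖ = 1)
    (heig : (NormedSpace.exp (s • F) ∘L ContinuousLinearMap.adjoint A ∘L
        NormedSpace.exp ((-2 * s) • F) ∘L A ∘L NormedSpace.exp (s • F)) Φ
      = (lam : ℂ) • Φ) :
    ⟪Φ, (F ∘L (NormedSpace.exp (s • F) ∘L ContinuousLinearMap.adjoint A ∘L
          NormedSpace.exp ((-2 * s) • F) ∘L A ∘L NormedSpace.exp (s • F))
        + (NormedSpace.exp (s • F) ∘L ContinuousLinearMap.adjoint A ∘L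
          NormedSpace.exp ((-2 * s) • F) ∘L A ∘L NormedSpace.exp (s • F)) ∘L F
        - (2 : ℝ) • (NormedSpace.exp (s • F) ∘L ContinuousLinearMap.adjoint A ∘L F ∘L
          NormedSpace.exp ((-2 * s) • F) ∘L A ∘L NormedSpace.exp (s • F))) Φ⟫_ℂ
      = 2 * (lam : ℂ) * ⟪Φ, F Φ⟫_ℂ
        - 2 * (lam : ℂ) *
          ⟪((lam ^ (-(1/2 : ℝ)) : ℝ) : ℂ) •
              (NormedSpace.exp ((-s) • F) ∘L A ∘L NormedSpace.exp (s • F)) Φ,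
            F (((lam ^ (-(1/2 : ℝ)) : ℝ) : ℂ) •
              (NormedSpace.exp ((-s) • F) ∘L A ∘L NormedSpace.exp (s • F)) Φ)⟫_ℂ :=
  variation_per_eigenvector_general A F hF s Φ lam hlam heig
end

section
/- Let λ : ℕ → ℝ satisfy λ i ≥ 1 for all i, and let s be a real number with s > 0 such that the family ((λ i)^{−s})_{i ∈ ℕ} is summable. Then for every t > 0 the family (exp(−t · λ i))_i is summable, the function t ↦ t^{s−1} · ∑'_i exp(−t · λ i) is integrable on (0, ∞), and ∫₀^∞ t^{s−1} (∑'_i exp(−t · λ i)) dt = Γ(s) · ∑'_i (λ i)^{−s}. -/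
/-!
Each term `t ^ (s - 1) * exp (-(t * λ))` integrates over `(0, ∞)` to `Γ(s) * λ ^ (-s)`; these
terms are nonnegative and their integrals are summable, so integral and sum may be interchanged.
The theta series converges because `exp (-x) ≤ n! / x ^ n` with `n = ⌈s⌉₊`, which for `λ ≥ 1`
dominates it by a multiple of the zeta series.
-/

open MeasureTheory Real Set

theorem exp_neg_le_factorial_div_pow {x : ℝ} (hx : 0 < x) (n : ℕ) :
    exp (-x) ≤ n.factorial / x ^ n := by
  rw [exp_neg, inv_le_comm₀ (exp_pos x) (by positivity), inv_div]
  exact pow_div_factorial_le_exp x hx.le n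

theorem summable_exp_neg_mul_of_summable_rpow_neg {ι : Type*} {lam : ι → ℝ}
    (hlam : ∀ i, 1 ≤ lam i) {s : ℝ} (hsum : Summable fun i => lam i ^ (-s)) {t : ℝ}
    (ht : 0 < t) : Summable fun i => exp (-(t * lam i)) := by
  set n := ⌈s⌉₊
  refine .of_nonneg_of_le (fun i => (exp_pos _).le) (fun i => ?_)
    (hsum.mul_left (n.factorial / t ^ n))
  have hlam_pos : 0 < lam i := one_pos.trans_le (hlam i)
  calc exp (-(t * lam i)) ≤ n.factorial / (t * lam i) ^ n :=
        exp_neg_le_factorial_div_pow (by positivity) n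
    _ = n.factorial / t ^ n * lam i ^ (-(n : ℝ)) := by
        rw [rpow_neg hlam_pos.le, rpow_natCast, mul_pow, div_mul_eq_div_div, div_eq_mul_inv]
    _ ≤ n.factorial / t ^ n * lam i ^ (-s) := by
        gcongr
        · exact hlam i
        · exact Nat.le_ceil s

theorem integral_rpow_mul_exp_neg_mul_Ioi_eq_Gamma_mul {a r : ℝ} (ha : 0 < a) (hr : 0 < r) :
    ∫ t in Ioi 0, t ^ (a - 1) * exp (-(t * r)) = Gamma a * r ^ (-a) := by
  simp_rw [mul_comm _ r, integral_rpow_mul_exp_neg_mul_Ioi ha hr, one_div,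
    inv_rpow hr.le, rpow_neg hr.le, mul_comm]

theorem integrableOn_rpow_mul_exp_neg_mul_Ioi {a r : ℝ} (ha : 0 < a) (hr : 0 < r) :
    IntegrableOn (fun t => t ^ (a - 1) * exp (-(t * r))) (Ioi 0) :=
  -- the Bochner integral of a non-integrable function is `0`
  .of_integral_ne_zero <| by
    rw [integral_rpow_mul_exp_neg_mul_Ioi_eq_Gamma_mul ha hr]; positivity

theorem integral_norm_rpow_mul_exp_neg_mul_Ioi {a r : ℝ} (ha : 0 < a) (hr : 0 < r) :
    ∫ t in Ioi 0, ‖t ^ (a - 1) * exp (-(t * r))‖ = Gamma a * r ^ (-a) := by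
  rw [← integral_rpow_mul_exp_neg_mul_Ioi_eq_Gamma_mul ha hr]
  refine setIntegral_congr_fun measurableSet_Ioi fun t (ht : 0 < t) => ?_
  exact norm_of_nonneg (by positivity)

theorem hasSum_integral_rpow_mul_tsum_exp_neg_mul {ι : Type*} [Countable ι]
    {lam : ι → ℝ} (hlam : ∀ i, 0 < lam i) {s : ℝ} (hs : 0 < s)
    (hsum : Summable fun i => lam i ^ (-s)) :
    HasSum (fun i => Gamma s * lam i ^ (-s))
      (∫ t in Ioi 0, t ^ (s - 1) * ∑' i, exp (-(t * lam i))) := by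
  have hterms := hasSum_integral_of_summable_integral_norm
    (fun i => integrableOn_rpow_mul_exp_neg_mul_Ioi hs (hlam i))
    (by simpa only [integral_norm_rpow_mul_exp_neg_mul_Ioi hs (hlam _)] using hsum.mul_left _)
  simpa only [integral_rpow_mul_exp_neg_mul_Ioi_eq_Gamma_mul hs (hlam _), tsum_mul_left]
    using hterms

/-- Mellin transform relation between the theta function `θ(t) = ∑ᵢ e^{−tλᵢ}` and the
zeta function `ζ(s) = ∑ᵢ λᵢ^{−s}`: `∫₀^∞ t^{s−1} θ(t) dt = Γ(s) ζ(s)`. -/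
theorem theta_mellin_eq_gamma_mul_zeta
    (lam : ℕ → ℝ) (hlam : ∀ i, 1 ≤ lam i) (s : ℝ) (hs : 0 < s)
    (hsum : Summable fun i => (lam i) ^ (-s)) :
    (∀ t : ℝ, 0 < t → Summable fun i => Real.exp (-(t * lam i))) ∧
    IntegrableOn (fun t : ℝ => t ^ (s - 1) * ∑' i, Real.exp (-(t * lam i))) (Set.Ioi 0) ∧
    (∫ t in Set.Ioi (0 : ℝ), t ^ (s - 1) * ∑' i, Real.exp (-(t * lam i)))
      = Real.Gamma s * ∑' i, (lam i) ^ (-s) := by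
  have hlam_pos : ∀ i, 0 < lam i := fun i => one_pos.trans_le (hlam i)
  have hmellin : (∫ t in Ioi 0, t ^ (s - 1) * ∑' i, exp (-(t * lam i)))
      = Gamma s * ∑' i, lam i ^ (-s) :=
    (hasSum_integral_rpow_mul_tsum_exp_neg_mul hlam_pos hs hsum).tsum_eq.symm.trans
      tsum_mul_left
  have hzeta_pos : 0 < ∑' i, lam i ^ (-s) :=
    hsum.tsum_pos (fun i => (rpow_pos_of_pos (hlam_pos i) _).le) 0 (rpow_pos_of_pos (hlam_pos 0) _)
  refine ⟨fun t ht => summable_exp_neg_mul_of_summable_rpow_neg hlam hsum ht, ?_, hmellin⟩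
  exact .of_integral_ne_zero (by rw [hmellin]; positivity)
end

section
/- Let N ∈ ℕ, let a : ℤ × ℤ → ℂ be a summable family, and let f¹, f² : ℤ → Matrix (Fin N) (Fin N) ℂ be families with (‖f¹_r‖)_r and (‖f²_l‖)_l summable. For |z| = |t| = 1 define f₁(z) := ∑'_r f¹_r · z^r, f₂(t) := ∑'_l f²_l · t^l, and K(z,t) := ∑'_{(n,m)} a_{n,m} · z^n · (conj t)^m. Then ∫₀^{2π} ∫₀^{2π} trace((f₁(e^{iθ}))ᴴ · f₂(e^{iφ})) · K(e^{iθ}, e^{iφ}) · (−i e^{−iθ}) · (i e^{iφ}) dφ dθ = (2π)² · ∑'_{(n,m)} a_{n,m} · trace((f¹_{n−1})ᴴ · f²_{m−1}). -/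
open scoped Real
open Matrix
attribute [local instance] Matrix.normedAddCommGroup

/-!
On the unit circle `t̄ = t⁻¹`, so the integrand is the absolutely convergent Laurent series
`∑ tr((f¹ᵣ)* f²ₗ) aₙₘ z^(n-r-1) t^(l-m+1)` over `((r, l), (n, m))`. Absolute convergence lets
both integrals pass through the sum, and `∫₀^{2π} e^{ikθ} dθ = 2π δₖ₀` keeps exactly the terms
with `r = n - 1` and `l = m - 1`.
-/

-- Makes the sup-norm matrix spaces over `RCLike` fields complete (as finite-dimensional spaces).
attribute [local instance] Matrix.normedSpace

theorem Summable.norm_mul_norm {ι κ E F : Type*} [SeminormedAddCommGroup E]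
    [SeminormedAddCommGroup F] {f : ι → E} {g : κ → F} (hf : Summable fun i => ‖f i‖)
    (hg : Summable fun j => ‖g j‖) : Summable fun p : ι × κ => ‖f p.1‖ * ‖g p.2‖ :=
  hf.mul_of_nonneg hg (fun _ => norm_nonneg _) fun _ => norm_nonneg _

namespace Matrix

section NormedRing

variable {l m n α : Type*} [Fintype l] [Fintype m] [Fintype n] [NormedRing α]

theorem norm_mul_le_card_mul (A : Matrix l m α) (B : Matrix m n α) :
    ‖A * B‖ ≤ Fintype.card m * ‖A‖ * ‖B‖ := by
  refine (norm_le_iff (by positivity)).2 fun i j => ?_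
  calc ‖∑ k, A i k * B k j‖ ≤ ∑ _k : m, ‖A‖ * ‖B‖ :=
        norm_sum_le_of_le _ fun k _ => norm_mul_le_of_le
          (norm_entry_le_entrywise_sup_norm A) (norm_entry_le_entrywise_sup_norm B)
    _ = Fintype.card m * ‖A‖ * ‖B‖ := by
        rw [Finset.sum_const, Finset.card_univ, nsmul_eq_mul, mul_assoc]

theorem norm_trace_le_card_mul (A : Matrix n n α) : ‖trace A‖ ≤ Fintype.card n * ‖A‖ := by
  calc ‖∑ i, A i i‖ ≤ ∑ _i : n, ‖A‖ :=
        norm_sum_le_of_le _ fun i _ => norm_entry_le_entrywise_sup_norm A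
    _ = Fintype.card n * ‖A‖ := by rw [Finset.sum_const, Finset.card_univ, nsmul_eq_mul]

theorem norm_trace_conjTranspose_mul_le [StarRing α] [NormedStarGroup α] (A B : Matrix n n α) :
    ‖trace (Aᴴ * B)‖ ≤ Fintype.card n ^ 2 * (‖A‖ * ‖B‖) := by
  calc ‖trace (Aᴴ * B)‖ ≤ Fintype.card n * (Fintype.card n * ‖Aᴴ‖ * ‖B‖) :=
        (norm_trace_le_card_mul _).trans
          (mul_le_mul_of_nonneg_left (norm_mul_le_card_mul _ _) (by positivity))
    _ = Fintype.card n ^ 2 * (‖A‖ * ‖B‖) := by rw [norm_conjTranspose]; ring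

end NormedRing

variable {n 𝕜 ι κ : Type*} [Fintype n] [RCLike 𝕜] {A : ι → Matrix n n 𝕜} {B : κ → Matrix n n 𝕜}

theorem summable_norm_trace_conjTranspose_mul (hA : Summable fun i => ‖A i‖)
    (hB : Summable fun j => ‖B j‖) :
    Summable fun p : ι × κ => ‖trace ((A p.1)ᴴ * B p.2)‖ :=
  ((hA.norm_mul_norm hB).mul_left _).of_nonneg_of_le (fun _ => norm_nonneg _)
    fun _ => norm_trace_conjTranspose_mul_le _ _

theorem trace_conjTranspose_tsum_mul_tsum (hA : Summable fun i => ‖A i‖)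
    (hB : Summable fun j => ‖B j‖) :
    trace ((∑' i, A i)ᴴ * ∑' j, B j) = ∑' p : ι × κ, trace ((A p.1)ᴴ * B p.2) := by
  have hAB : Summable fun p : ι × κ => (A p.1)ᴴ * B p.2 := by
    refine .of_norm_bounded ((hA.norm_mul_norm hB).mul_left (Fintype.card n : ℝ))
      fun p => ?_
    simpa only [norm_conjTranspose, mul_assoc] using norm_mul_le_card_mul (A p.1)ᴴ (B p.2)
  rw [conjTranspose_tsum,
    hA.of_norm.matrix_conjTranspose.tsum_mul_tsum hB.of_norm hAB]
  exact (hAB.hasSum.map (traceAddMonoidHom n 𝕜) continuous_id.matrix_trace).tsum_eq.symm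

end Matrix

theorem star_zpow_of_norm_eq_one {𝕜 : Type*} [RCLike 𝕜] {u : 𝕜} (hu : ‖u‖ = 1) (k : ℤ) :
    star u ^ k = u ^ (-k) := by
  rw [← starRingEnd_apply, ← RCLike.inv_eq_conj hu, _root_.inv_zpow']

theorem summable_norm_zpow_smul_of_norm_eq_one {E 𝕜 : Type*} [RCLike 𝕜] [SeminormedAddCommGroup E]
    [NormedSpace 𝕜 E] {f : ℤ → E} (hf : Summable fun r => ‖f r‖) {u : 𝕜} (hu : ‖u‖ = 1) :
    Summable fun r => ‖u ^ r • f r‖ := by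
  simpa only [norm_smul, norm_zpow, hu, _root_.one_zpow, one_mul] using hf

theorem Matrix.trace_conjTranspose_tsum_zpow_smul_mul {n 𝕜 : Type*} [Fintype n] [RCLike 𝕜]
    {f g : ℤ → Matrix n n 𝕜} (hf : Summable fun r => ‖f r‖) (hg : Summable fun l => ‖g l‖)
    {u v : 𝕜} (hu : ‖u‖ = 1) (hv : ‖v‖ = 1) :
    trace ((∑' r, u ^ r • f r)ᴴ * ∑' l, v ^ l • g l) =
      ∑' p : ℤ × ℤ, u ^ (-p.1) * v ^ p.2 * trace ((f p.1)ᴴ * g p.2) := by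
  rw [trace_conjTranspose_tsum_mul_tsum (summable_norm_zpow_smul_of_norm_eq_one hf hu)
    (summable_norm_zpow_smul_of_norm_eq_one hg hv)]
  refine tsum_congr fun p => ?_
  rw [conjTranspose_smul, smul_mul_smul_comm, trace_smul, smul_eq_mul, star_zpow₀,
    star_zpow_of_norm_eq_one hu]

open Complex MeasureTheory

theorem trace_conjTranspose_mul_kernel_eq_tsum {n : Type*} [Fintype n]
    {f g : ℤ → Matrix n n ℂ} {a : ℤ × ℤ → ℂ} (hf : Summable fun r => ‖f r‖)
    (hg : Summable fun l => ‖g l‖) (ha : Summable fun p => ‖a p‖) {u v : ℂ} (hu : ‖u‖ = 1)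
    (hv : ‖v‖ = 1) :
    trace ((∑' r, u ^ r • f r)ᴴ * ∑' l, v ^ l • g l) *
        (∑' p : ℤ × ℤ, a p * u ^ p.1 * starRingEnd ℂ v ^ p.2) * (-I * u⁻¹) * (I * v) =
      ∑' q : (ℤ × ℤ) × (ℤ × ℤ), trace ((f q.1.1)ᴴ * g q.1.2) * a q.2 *
        u ^ (q.2.1 - q.1.1 - 1) * v ^ (q.1.2 - q.2.2 + 1) := by
  have hu0 : u ≠ 0 := norm_ne_zero_iff.1 (hu.trans_ne one_ne_zero)
  have hv0 : v ≠ 0 := norm_ne_zero_iff.1 (hv.trans_ne one_ne_zero)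
  have htrace : Summable fun p : ℤ × ℤ => ‖u ^ (-p.1) * v ^ p.2 * trace ((f p.1)ᴴ * g p.2)‖ := by
    simpa only [norm_mul, norm_zpow, hu, hv, _root_.one_zpow, one_mul]
      using summable_norm_trace_conjTranspose_mul hf hg
  have hkernel : Summable fun p : ℤ × ℤ => ‖a p * u ^ p.1 * v ^ (-p.2)‖ := by
    simpa only [norm_mul, norm_zpow, hu, hv, _root_.one_zpow, mul_one] using ha
  simp_rw [starRingEnd_apply, star_zpow_of_norm_eq_one hv]
  rw [trace_conjTranspose_tsum_zpow_smul_mul hf hg hu hv,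
    tsum_mul_tsum_of_summable_norm htrace hkernel, ← tsum_mul_right, ← tsum_mul_right]
  refine tsum_congr fun q => ?_
  rw [sub_sub, zpow_sub₀ hu0, zpow_add₀ hu0, zpow_add₀ hv0, sub_eq_add_neg, zpow_add₀ hv0,
    _root_.zpow_neg, _root_.zpow_neg, zpow_one, zpow_one]
  field_simp
  ring_nf
  rw [I_sq]
  ring

theorem norm_exp_ofReal_mul_I_zpow (x : ℝ) (k : ℤ) : ‖exp (x * I) ^ k‖ = 1 := by
  rw [norm_zpow, norm_exp_ofReal_mul_I, _root_.one_zpow]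

theorem continuous_exp_ofReal_mul_I_zpow (k : ℤ) : Continuous fun x : ℝ => exp (x * I) ^ k :=
  (continuous_exp.comp (continuous_ofReal.mul continuous_const)).zpow₀ k
    fun _ => Or.inl (exp_ne_zero _)

theorem integral_exp_ofReal_mul_I_zpow (k : ℤ) :
    ∫ θ in (0 : ℝ)..2 * π, exp (θ * I) ^ k = if k = 0 then ((2 * π : ℝ) : ℂ) else 0 := by
  split_ifs with hk
  · simp [hk]
  have hkI : (k : ℂ) * I ≠ 0 := by simp [hk]
  have hexp : ∀ θ : ℝ, exp (θ * I) ^ k = exp (k * I * θ) := fun θ => by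
    rw [← exp_int_mul]; ring_nf
  have hperiod : exp (k * I * (2 * π : ℝ)) = 1 := by
    rw [← exp_int_mul_two_pi_mul_I k]; push_cast; ring_nf
  simp_rw [hexp]
  rw [integral_exp_mul_complex hkI]
  push_cast at hperiod ⊢
  rw [hperiod]
  simp

theorem integral_tsum_mul_exp_ofReal_mul_I_zpow {ι : Type*} [Countable ι] {c : ι → ℂ}
    (hc : Summable fun i => ‖c i‖) (k : ι → ℤ) :
    ∫ θ in (0 : ℝ)..2 * π, ∑' i, c i * exp (θ * I) ^ k i =
      ((2 * π : ℝ) : ℂ) * ∑' i, if k i = 0 then c i else 0 := by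
  have h2π : (0 : ℝ) ≤ 2 * π := by positivity
  rw [intervalIntegral.integral_of_le h2π, ← integral_tsum_of_summable_integral_norm,
    ← tsum_mul_left]
  · refine tsum_congr fun i => ?_
    rw [integral_const_mul, ← intervalIntegral.integral_of_le h2π,
      integral_exp_ofReal_mul_I_zpow]
    split_ifs <;> ring
  · exact fun i => (continuous_const.mul (continuous_exp_ofReal_mul_I_zpow _)).integrableOn_Ioc
  · simp only [norm_mul, norm_exp_ofReal_mul_I_zpow, mul_one, integral_const]
    simpa [h2π] using hc.mul_left (2 * π)

theorem integral_integral_tsum_mul_exp_ofReal_mul_I_zpow {ι : Type*} [Countable ι] {c : ι → ℂ}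
    (hc : Summable fun i => ‖c i‖) (α β : ι → ℤ) :
    ∫ θ in (0 : ℝ)..2 * π, ∫ φ in (0 : ℝ)..2 * π,
        ∑' i, c i * exp (θ * I) ^ α i * exp (φ * I) ^ β i =
      ((2 * π : ℝ) : ℂ) ^ 2 * ∑' i, if α i = 0 ∧ β i = 0 then c i else 0 := by
  have hinner : ∀ θ : ℝ, ∫ φ in (0 : ℝ)..2 * π,
      ∑' i, c i * exp (θ * I) ^ α i * exp (φ * I) ^ β i =
        ((2 * π : ℝ) : ℂ) * ∑' i, (if β i = 0 then c i else 0) * exp (θ * I) ^ α i := by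
    intro θ
    rw [integral_tsum_mul_exp_ofReal_mul_I_zpow _ β]
    · congr 1
      exact tsum_congr fun i => by split_ifs <;> ring
    · simpa only [norm_mul, norm_exp_ofReal_mul_I_zpow, mul_one] using hc
  have hc' : Summable fun i => ‖if β i = 0 then c i else 0‖ :=
    hc.of_nonneg_of_le (fun _ => norm_nonneg _) fun i => by split_ifs <;> simp
  simp_rw [hinner, intervalIntegral.integral_const_mul,
    integral_tsum_mul_exp_ofReal_mul_I_zpow hc' α, ite_and]
  ring

theorem tsum_ite_fst_eq {α β M : Type*} [AddCommMonoid M] [TopologicalSpace M] [DecidableEq α]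
    (f : β → α) (g : α × β → M) :
    ∑' q : α × β, (if q.1 = f q.2 then g q else 0) = ∑' b, g (f b, b) := by
  rw [← Function.Injective.tsum_eq (g := fun b => (f b, b))]
  · simp
  · exact fun b b' h => congrArg Prod.snd h
  · intro q hq
    exact ⟨q.2, Prod.ext (of_not_not fun h => hq (if_neg (Ne.symm h))) rfl⟩

/-- The double contour integral over the unit circles of
`tr(f₁(z)* f₂(t)) ∑ aₙₘ zⁿ t̄ᵐ dz̄ dt` equals `(2π)² ∑ aₙₘ tr((f¹ₙ₋₁)* f²ₘ₋₁)`: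
the computational content of the paper's formula for the symplectic form at the
trivial bundle. -/
theorem symplectic_form_double_series
    (N : ℕ) (a : ℤ × ℤ → ℂ) (ha : Summable a)
    (f1 f2 : ℤ → Matrix (Fin N) (Fin N) ℂ)
    (hf1 : Summable fun r => ‖f1 r‖) (hf2 : Summable fun l => ‖f2 l‖) :
    (∫ θ in (0 : ℝ)..(2 * π), ∫ φ in (0 : ℝ)..(2 * π),
      Matrix.trace
        ((∑' r : ℤ, Complex.exp (θ * Complex.I) ^ r • f1 r)ᴴ *
          (∑' l : ℤ, Complex.exp (φ * Complex.I) ^ l • f2 l)) *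
      (∑' p : ℤ × ℤ, a p * Complex.exp (θ * Complex.I) ^ p.1 *
          (starRingEnd ℂ (Complex.exp (φ * Complex.I))) ^ p.2) *
      (-Complex.I * Complex.exp (-(θ * Complex.I))) *
      (Complex.I * Complex.exp (φ * Complex.I)))
    = ((2 * π : ℝ) : ℂ) ^ 2 *
        ∑' p : ℤ × ℤ, a p * Matrix.trace ((f1 (p.1 - 1))ᴴ * f2 (p.2 - 1)) := by
  have ha' : Summable fun p => ‖a p‖ := summable_norm_iff.mpr ha
  simp_rw [Complex.exp_neg, trace_conjTranspose_mul_kernel_eq_tsum hf1 hf2 ha'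
    (norm_exp_ofReal_mul_I _) (norm_exp_ofReal_mul_I _)]
  rw [integral_integral_tsum_mul_exp_ofReal_mul_I_zpow
    ((summable_norm_trace_conjTranspose_mul hf1 hf2).mul_norm ha')]
  congr 1
  calc _ = ∑' q : (ℤ × ℤ) × (ℤ × ℤ), if q.1 = (q.2.1 - 1, q.2.2 - 1)
          then trace ((f1 q.1.1)ᴴ * f2 q.1.2) * a q.2 else 0 :=
        tsum_congr fun q => if_congr (by rw [Prod.ext_iff]; omega) rfl rfl
    _ = _ := (tsum_ite_fst_eq (fun p : ℤ × ℤ => (p.1 - 1, p.2 - 1)) _).trans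
        (tsum_congr fun p => mul_comm _ _)
end

section
/- Let N ∈ ℕ, let U ⊆ ℂ be open, let f : ℂ → Matrix (Fin N) (Fin N) ℂ be complex-differentiable (holomorphic) on U, let ρ : ℂ → ℝ be smooth, and let s : ℂ → Matrix (Fin N) (Fin N) ℂ (a column of sections, viewed matrix-valued) be real-differentiable. For a real-differentiable function u : ℂ → Matrix (Fin N) (Fin N) ℂ define the Wirtinger operator (∂̄u)(z) := (1/2) • (fderiv ℝ u z 1 + Complex.I • fderiv ℝ u z Complex.I). Then for every z ∈ U: exp(−ρ(z) • f(z)) * (∂̄(fun w => exp(ρ(w) • f(w)) * s(w)))(z) = (∂̄ s)(z) + (∂̄ρ)(z) • (f(z) * s(z)), where exp is the matrix exponential. -/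
open NormedSpace

/-- Entry evaluation as a real-linear map on matrices (instance-light). -/
def entryLM (N : ℕ) (i j : Fin N) : Matrix (Fin N) (Fin N) ℂ →ₗ[ℝ] ℂ where
  toFun M := M i j
  map_add' _ _ := rfl
  map_smul' _ _ := rfl

/-- Entry evaluation as a complex-linear map on matrices (instance-light). -/
def entryLMC (N : ℕ) (i j : Fin N) : Matrix (Fin N) (Fin N) ℂ →ₗ[ℂ] ℂ where
  toFun M := M i j
  map_add' _ _ := rfl
  map_smul' _ _ := rfl

section LinftyWorld
attribute [local instance] Matrix.linftyOpNormedRing Matrix.linftyOpNormedAlgebra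

variable {N : ℕ}

/-- Assembling a matrix-valued complex Fréchet derivative from entrywise derivatives,
in the L∞-operator-norm world. -/
lemma hasFDerivAt_matrix_of_entries_linfty {u : ℂ → Matrix (Fin N) (Fin N) ℂ}
    {P : ℂ →L[ℂ] Matrix (Fin N) (Fin N) ℂ} {z : ℂ}
    (h : ∀ i j, ∃ q : ℂ →L[ℂ] ℂ, HasFDerivAt (fun w => u w i j) q z ∧ ∀ v, q v = P v i j) :
    HasFDerivAt u P z := by
  let Φ : Matrix (Fin N) (Fin N) ℂ ≃L[ℂ] (Fin N → Fin N → ℂ) :=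
    (Matrix.ofLinearEquiv ℂ).symm.toContinuousLinearEquiv
  refine Φ.comp_hasFDerivAt_iff.mp ?_
  rw [hasFDerivAt_pi']
  intro i
  rw [hasFDerivAt_pi']
  intro j
  obtain ⟨q, hq, hqv⟩ := h i j
  refine hq.congr_fderiv (Eq.symm ?_)
  refine ContinuousLinearMap.ext fun v => ?_
  exact ((hqv v).symm).trans rfl

/-- In the L∞-operator-norm Banach algebra of matrices, the Fréchet derivative of `exp`
at `A` in a direction `B` commuting with `A` is `exp A * B`. -/
lemma fderiv_exp_comm (A B : Matrix (Fin N) (Fin N) ℂ) (h : Commute A B) :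
    fderiv ℂ (exp) A B = exp A * B := by
  have hexp : HasFDerivAt (exp) (fderiv ℂ (exp) A) A :=
    (exp_analytic (𝕂 := ℂ) A).differentiableAt.hasFDerivAt
  have hline : HasFDerivAt (fun t : ℂ => A + t • B)
      ((1 : ℂ →L[ℂ] ℂ).smulRight B) 0 := by
    exact ((hasFDerivAt_id (𝕜 := ℂ) (0:ℂ)).smul_const B).const_add A
  have h1 : HasDerivAt (fun t : ℂ => exp (A + t • B)) (fderiv ℂ (exp) A B) 0 := by
    have hexp' : HasFDerivAt (exp) (fderiv ℂ (exp) A) (A + (0:ℂ) • B) := by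
      simpa using hexp
    have := (hexp'.comp 0 hline).hasDerivAt
    have e : (fderiv ℂ exp A ∘SL (1 : ℂ →L[ℂ] ℂ).smulRight B) 1 = fderiv ℂ exp A B := by simp
    exact this.congr_deriv e
  have h2 : HasDerivAt (fun t : ℂ => exp (A + t • B)) (exp A * B) 0 := by
    have key : (fun t : ℂ => exp (A + t • B)) = fun t : ℂ => exp A * exp (t • B) := by
      funext t
      exact exp_add_of_commute (h.smul_right t)
    rw [key]
    have := (hasDerivAt_exp_smul_const (𝕂 := ℂ) B (0:ℂ)).const_mul (exp A)
    simp [mul_assoc] at this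
    exact this
  exact h1.unique h2

/-- Key analytic computation, carried out in the L∞-operator-norm Banach algebra, but whose
statement is instance-light: the function `w ↦ exp (ρ w • f w)` has, entrywise, a real
Fréchet derivative `D` whose Wirtinger combination is `(∂̄ρ)(z) • (exp (ρ z • f z) * f z)`. -/
lemma auxA (N : ℕ)
    (f : ℂ → Matrix (Fin N) (Fin N) ℂ)
    (ρ : ℂ → ℝ) (hρ : ContDiff ℝ (⊤ : ℕ∞) ρ) (z : ℂ)
    (fd : ℂ →ₗ[ℂ] Matrix (Fin N) (Fin N) ℂ)
    (hfe : ∀ i j, HasFDerivAt (fun w => f w i j)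
      (LinearMap.toContinuousLinearMap ((entryLMC N i j).comp fd)) z) :
    ∃ D : ℂ →ₗ[ℝ] Matrix (Fin N) (Fin N) ℂ,
      (∀ i j, HasFDerivAt (fun w => NormedSpace.exp (ρ w • f w) i j)
        (LinearMap.toContinuousLinearMap ((entryLM N i j).comp D)) z) ∧
      (2 : ℂ)⁻¹ • (D 1 + Complex.I • D Complex.I)
        = ((2 : ℂ)⁻¹ • (fderiv ℝ (fun w => ((ρ w : ℂ))) z 1
            + Complex.I • fderiv ℝ (fun w => ((ρ w : ℂ))) z Complex.I))
          • (NormedSpace.exp (ρ z • f z) * f z) := by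
  classical
  set ρ' : ℂ → ℂ := fun w => ((ρ w : ℂ)) with hρ'def
  have hρd : Differentiable ℝ ρ' :=
    Complex.ofRealCLM.differentiable.comp (hρ.differentiable (by simp))
  set cd : ℂ →L[ℝ] ℂ := fderiv ℝ ρ' z with hcd
  have hc : HasFDerivAt ρ' cd z := (hρd z).hasFDerivAt
  set Fd : ℂ →L[ℂ] Matrix (Fin N) (Fin N) ℂ := LinearMap.toContinuousLinearMap fd with hFd
  have hfz : HasFDerivAt f Fd z := by
    apply hasFDerivAt_matrix_of_entries_linfty
    intro i j
    exact ⟨_, hfe i j, fun v => rfl⟩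
  have hff : HasFDerivAt f (Fd.restrictScalars ℝ) z := hfz.restrictScalars ℝ
  have hA : HasFDerivAt (fun w => ρ' w • f w)
      (ρ' z • Fd.restrictScalars ℝ + cd.smulRight (f z)) z := hc.smul hff
  set L : Matrix (Fin N) (Fin N) ℂ →L[ℂ] Matrix (Fin N) (Fin N) ℂ :=
    fderiv ℂ (exp) (ρ' z • f z) with hL
  have hexp : HasFDerivAt (exp) L (ρ' z • f z) :=
    (exp_analytic (𝕂 := ℂ) _).differentiableAt.hasFDerivAt
  set A' : ℂ →L[ℝ] Matrix (Fin N) (Fin N) ℂ :=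
    ρ' z • Fd.restrictScalars ℝ + cd.smulRight (f z) with hA'
  have hg : HasFDerivAt (fun w => exp (ρ' w • f w))
      ((L.restrictScalars ℝ).comp A') z :=
    (hexp.restrictScalars ℝ).comp z hA
  have hsmul : ∀ w, ρ w • f w = ρ' w • f w := fun w => (Complex.coe_smul _ _).symm
  have hg' : HasFDerivAt (fun w => exp (ρ w • f w))
      ((L.restrictScalars ℝ).comp A') z := by
    simpa only [hsmul] using hg
  refine ⟨((L.restrictScalars ℝ).comp A').toLinearMap, ?_, ?_⟩
  · intro i j
    have hcont : HasFDerivAt (fun M : Matrix (Fin N) (Fin N) ℂ => M i j)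
        (LinearMap.toContinuousLinearMap (entryLM N i j)) (exp (ρ z • f z)) :=
      (LinearMap.toContinuousLinearMap (entryLM N i j)).hasFDerivAt
    exact hcont.comp z hg'
  · have hval : ∀ v : ℂ, ((L.restrictScalars ℝ).comp A') v
        = L (ρ' z • Fd v + cd v • f z) := fun v => rfl
    have hfdI : Fd Complex.I = Complex.I • Fd 1 := by
      have := Fd.map_smul Complex.I (1:ℂ)
      simpa using this
    have hkey : (((L.restrictScalars ℝ).comp A') 1
          + Complex.I • ((L.restrictScalars ℝ).comp A') Complex.I)
        = (cd 1 + Complex.I • cd Complex.I) • L (f z) := by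
      rw [hval, hval]
      have : Complex.I • L (ρ' z • Fd Complex.I + cd Complex.I • f z)
          = L (ρ' z • (Complex.I • Fd Complex.I) + (Complex.I • cd Complex.I) • f z) := by
        rw [← L.map_smul]
        congr 1
        rw [smul_add, smul_comm (Complex.I) (ρ' z), smul_smul, smul_smul, smul_eq_mul]
      rw [this, ← L.map_add]
      have : ρ' z • Fd 1 + cd 1 • f z + (ρ' z • Complex.I • Fd Complex.I
          + (Complex.I * cd Complex.I) • f z)
          = (cd 1 + Complex.I * cd Complex.I) • f z := by
        have hI : Complex.I • Fd Complex.I = -(Fd 1) := by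
          rw [hfdI, smul_smul, Complex.I_mul_I, neg_one_smul]
        rw [hI]
        module
      rw [show (Complex.I • cd Complex.I : ℂ) = Complex.I * cd Complex.I from rfl, this,
        L.map_smul]
    have hLf : L (f z) = exp (ρ' z • f z) * f z := by
      apply fderiv_exp_comm
      exact (Commute.refl (f z)).smul_left (ρ' z)
    show (2 : ℂ)⁻¹ • (((L.restrictScalars ℝ).comp A') 1
        + Complex.I • ((L.restrictScalars ℝ).comp A') Complex.I) = _
    rw [hkey, hLf]
    rw [show (ρ z • f z : Matrix (Fin N) (Fin N) ℂ) = ρ' z • f z from hsmul z]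
    rw [smul_smul, smul_eq_mul]
    rfl
end LinftyWorld

attribute [local instance] Matrix.normedAddCommGroup Matrix.normedSpace

open Matrix

/-- The Wirtinger `∂̄` operator on functions `ℂ → M`:
`(∂̄ u)(z) = (1/2)(∂u/∂x + i ∂u/∂y)`. -/
noncomputable def wirtingerDbar {M : Type*} [NormedAddCommGroup M] [NormedSpace ℂ M]
    (u : ℂ → M) (z : ℂ) : M :=
  (2 : ℂ)⁻¹ • (fderiv ℝ u z 1 + Complex.I • fderiv ℝ u z Complex.I)

/-- Assembling a matrix-valued Fréchet derivative from entrywise derivatives. -/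
lemma hasFDerivAt_matrix_of_entries {N : ℕ} {u : ℂ → Matrix (Fin N) (Fin N) ℂ}
    {P : ℂ →L[ℝ] Matrix (Fin N) (Fin N) ℂ} {z : ℂ}
    (h : ∀ i j, ∃ q : ℂ →L[ℝ] ℂ, HasFDerivAt (fun w => u w i j) q z ∧ ∀ v, q v = P v i j) :
    HasFDerivAt u P z := by
  refine ((Matrix.ofLinearEquiv ℝ).symm.toContinuousLinearEquiv :
    Matrix (Fin N) (Fin N) ℂ ≃L[ℝ] (Fin N → Fin N → ℂ)).comp_hasFDerivAt_iff.mp ?_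
  rw [hasFDerivAt_pi']
  intro i
  rw [hasFDerivAt_pi']
  intro j
  obtain ⟨q, hq, hqv⟩ := h i j
  refine hq.congr_fderiv (Eq.symm ?_)
  refine ContinuousLinearMap.ext fun v => ?_
  exact ((hqv v).symm).trans rfl

/-- The paper's identity `exp(−ρf) ∘ ∂̄ ∘ exp(ρf) s = ∂̄ s + (∂̄ρ) f s`: the conjugated
`∂̄`-operator associated with the holomorphic 1-cocycle `f` and the partition of unity `ρ`
is `∂̄ + f ∂̄ρ`. -/
theorem conjugated_dbar_eq_dbar_add_cocycle
    (N : ℕ) (U : Set ℂ) (hU : IsOpen U)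
    (f : ℂ → Matrix (Fin N) (Fin N) ℂ) (hf : DifferentiableOn ℂ f U)
    (ρ : ℂ → ℝ) (hρ : ContDiff ℝ (⊤ : ℕ∞) ρ)
    (s : ℂ → Matrix (Fin N) (Fin N) ℂ) (hs : Differentiable ℝ s) :
    ∀ z ∈ U,
      NormedSpace.exp (-(ρ z • f z)) *
          wirtingerDbar (fun w => NormedSpace.exp (ρ w • f w) * s w) z
        = wirtingerDbar s z
            + wirtingerDbar (fun w => ((ρ w : ℂ))) z • (f z * s z) := by
  classical
  intro z hz
  -- entrywise complex differentiability of f at z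
  have hfd : HasFDerivAt f (fderiv ℂ f z) z :=
    (hf.differentiableAt (hU.mem_nhds hz)).hasFDerivAt
  set fdl : ℂ →ₗ[ℂ] Matrix (Fin N) (Fin N) ℂ := (fderiv ℂ f z).toLinearMap with hfdl
  have hfe : ∀ i j, HasFDerivAt (fun w => f w i j)
      (LinearMap.toContinuousLinearMap ((entryLMC N i j).comp fdl)) z := by
    intro i j
    have := ((LinearMap.toContinuousLinearMap (entryLMC N i j)).hasFDerivAt).comp z hfd
    exact this
  obtain ⟨D, hDe, hDkey⟩ := auxA N f ρ hρ z fdl hfe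
  set g : ℂ → Matrix (Fin N) (Fin N) ℂ := fun w => NormedSpace.exp (ρ w • f w) with hgdef
  set E : Matrix (Fin N) (Fin N) ℂ := NormedSpace.exp (ρ z • f z) with hE
  set E' : Matrix (Fin N) (Fin N) ℂ := NormedSpace.exp (-(ρ z • f z)) with hE'
  set Ds : ℂ →L[ℝ] Matrix (Fin N) (Fin N) ℂ := fderiv ℝ s z with hDs
  have hsz : HasFDerivAt s Ds z := (hs z).hasFDerivAt
  have hsE : ∀ k j, HasFDerivAt (fun w => s w k j)
      ((LinearMap.toContinuousLinearMap (entryLM N k j)).comp Ds) z := fun k j =>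
    ((LinearMap.toContinuousLinearMap (entryLM N k j)).hasFDerivAt).comp z hsz
  set Pl : ℂ →ₗ[ℝ] Matrix (Fin N) (Fin N) ℂ :=
    { toFun := fun v => D v * s z + g z * Ds v
      map_add' := by
        intro a b
        simp only [map_add, Matrix.add_mul, Matrix.mul_add]
        abel
      map_smul' := by
        intro r a
        simp only [RingHom.id_apply, _root_.map_smul, Matrix.smul_mul, Matrix.mul_smul,
          smul_add] } with hPl
  set P : ℂ →L[ℝ] Matrix (Fin N) (Fin N) ℂ := LinearMap.toContinuousLinearMap Pl with hP
  have hPv : ∀ v, P v = D v * s z + g z * Ds v := fun v => rfl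
  have hu : HasFDerivAt (fun w => g w * s w) P z := by
    apply hasFDerivAt_matrix_of_entries
    intro i j
    refine ⟨∑ k, (g z i k • ((LinearMap.toContinuousLinearMap (entryLM N k j)).comp Ds)
        + s z k j • (LinearMap.toContinuousLinearMap ((entryLM N i k).comp D))), ?_, ?_⟩
    · have hfun : (fun w => (g w * s w) i j) = fun w => ∑ k, g w i k * s w k j := by
        funext w; exact Matrix.mul_apply
      rw [hfun]
      apply HasFDerivAt.fun_sum
      intro k _
      exact (hDe i k).mul (hsE k j)
    · intro v
      simp only [ContinuousLinearMap.coe_sum', Finset.sum_apply, ContinuousLinearMap.add_apply,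
        ContinuousLinearMap.coe_smul', Pi.smul_apply, ContinuousLinearMap.coe_comp',
        Function.comp_apply, LinearMap.coe_toContinuousLinearMap, LinearMap.coe_comp]
      rw [hPv]
      simp only [Matrix.add_apply, Matrix.mul_apply]
      rw [← Finset.sum_add_distrib]
      refine Finset.sum_congr rfl fun k _ => ?_
      simp [entryLM, smul_eq_mul]
      change g z i k * Ds v k j + s z k j * D v i k = D v i k * s z k j + g z i k * Ds v k j
      ring
  have hwu : wirtingerDbar (fun w => g w * s w) z
      = (2 : ℂ)⁻¹ • (P 1 + Complex.I • P Complex.I) := by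
    rw [wirtingerDbar]
    exact congrArg (fun L : ℂ →L[ℝ] Matrix (Fin N) (Fin N) ℂ => (2 : ℂ)⁻¹ • (L 1 + Complex.I • L Complex.I)) hu.fderiv
  have hstep : (2 : ℂ)⁻¹ • (P 1 + Complex.I • P Complex.I)
      = ((2 : ℂ)⁻¹ • (D 1 + Complex.I • D Complex.I)) * s z
        + g z * ((2 : ℂ)⁻¹ • (Ds 1 + Complex.I • Ds Complex.I)) := by
    simp only [hPv, Matrix.add_mul, Matrix.mul_add, smul_add, Matrix.smul_mul, Matrix.mul_smul,
      smul_smul]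
    module
  set c : ℂ := wirtingerDbar (fun w => ((ρ w : ℂ))) z with hc
  have hkey' : (2 : ℂ)⁻¹ • (D 1 + Complex.I • D Complex.I) = c • (E * f z) := hDkey
  have hws : wirtingerDbar s z = (2 : ℂ)⁻¹ • (Ds 1 + Complex.I • Ds Complex.I) := rfl
  have hinv : E' * E = 1 := by
    have h1 : NormedSpace.exp (-(ρ z • f z) + ρ z • f z) = E' * E :=
      Matrix.exp_add_of_commute (-(ρ z • f z)) (ρ z • f z) ((Commute.refl (ρ z • f z)).neg_left)
    rw [neg_add_cancel] at h1
    have h2 : NormedSpace.exp (0 : Matrix (Fin N) (Fin N) ℂ) = 1 := NormedSpace.exp_zero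
    rw [← h1, h2]
  have hgz : g z = E := rfl
  rw [hwu, hstep, hkey', ← hws, hgz]
  rw [Matrix.mul_add, Matrix.smul_mul, Matrix.mul_smul]
  simp only [← Matrix.mul_assoc]
  rw [hinv, Matrix.one_mul, Matrix.one_mul, add_comm]
end
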